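/- Let R be a regular S-graded ring. Then every homogeneous element of the classical Brown–McCoy radical G(R) of R belongs to the graded Brown–McCoy radical 𝒢(R); equivalently, the largest homogeneous ideal of R contained in G(R) is contained in 𝒢(R). -/

import Mathlib

/-!
Common framework: S-graded rings (rings that are direct sums of additive
subgroups indexed by a set S, with homogeneous products homogeneous),
homogeneous ideals, graded modules, and the various Brown--McCoy radicals.
-/

universe u v w

/-- An `S`-graded ring structure on a (not necessarily unital or commutative)
associative ring `R`: a family of additive subgroups indexed by a nonempty set `S`
whose internal direct sum is `R`, such that whenever `R_s · R_t ≠ 0` there is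
`u ∈ S` with `R_s · R_t ⊆ R_u`. -/
structure SGraded (S : Type v) (R : Type w) [NonUnitalRing R] where
  component : S → AddSubgroup R
  nonemptyS : Nonempty S
  independent : iSupIndep component
  iSup_eq_top : (⨆ s, component s) = ⊤
  mul_cond : ∀ s t : S, (∃ a ∈ component s, ∃ b ∈ component t, a * b ≠ 0) →
    ∃ u : S, ∀ a ∈ component s, ∀ b ∈ component t, a * b ∈ component u

namespace SGraded

variable {S : Type v} {R : Type w} [NonUnitalRing R] (G : SGraded S R)

/-- A homogeneous element. -/
def Homog (a : R) : Prop := ∃ s, a ∈ G.component s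

/-- The homogeneous part `A = ⋃ s, R_s` of `R`. -/
def homogPart : Set R := {a : R | G.Homog a}

/-- Two homogeneous elements are addable if one is `0` or they have the same degree. -/
def Addable (a b : R) : Prop := a = 0 ∨ b = 0 ∨ ∃ s, a ∈ G.component s ∧ b ∈ G.component s

/-- `ε ∈ S` is idempotent: `R_ε · R_ε ≠ 0` and `R_ε · R_ε ⊆ R_ε`. -/
def IsIdem (ε : S) : Prop :=
  (∃ a ∈ G.component ε, ∃ b ∈ G.component ε, a * b ≠ 0) ∧
  ∀ a ∈ G.component ε, ∀ b ∈ G.component ε, a * b ∈ G.component ε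

/-- Condition (Δ): the product of two nonidempotent degrees is never idempotent. -/
def CondDelta : Prop := ∀ s t u : S,
  (∃ a ∈ G.component s, ∃ b ∈ G.component t, a * b ≠ 0) →
  (∀ a ∈ G.component s, ∀ b ∈ G.component t, a * b ∈ G.component u) →
  ¬ G.IsIdem s → ¬ G.IsIdem t → ¬ G.IsIdem u

/-- Regularity (cancellativity) of the grading. -/
def Regular : Prop := ∀ a b c : R, G.Homog a → G.Homog b → G.Homog c →
  a ≠ 0 → b ≠ 0 → c ≠ 0 →
  ((a * c ≠ 0 → b * c ≠ 0 → G.Addable (a * c) (b * c) → G.Addable a b) ∧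
   (c * a ≠ 0 → c * b ≠ 0 → G.Addable (c * a) (c * b) → G.Addable a b))

end SGraded

section Rings

variable {R : Type w} [NonUnitalRing R]

/-- A right ideal of `R`, as an additive subgroup. -/
def IsRightIdeal (I : AddSubgroup R) : Prop := ∀ x ∈ I, ∀ r : R, x * r ∈ I

/-- A two-sided ideal of `R`, as an additive subgroup. -/
def IsTwoSidedIdeal' (I : AddSubgroup R) : Prop := ∀ x ∈ I, ∀ r : R, x * r ∈ I ∧ r * x ∈ I

/-- The right ideal of `R` generated by a set. -/
def rightIdealGen (T : Set R) : AddSubgroup R :=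
  sInf {I : AddSubgroup R | T ⊆ I ∧ IsRightIdeal I}

/-- A right ideal of the (sub)ring `E`, as an additive subgroup of `R` contained in `E`. -/
def IsRightIdealOn (E I : AddSubgroup R) : Prop := I ≤ E ∧ ∀ x ∈ I, ∀ r ∈ E, x * r ∈ I

/-- A two-sided ideal of the (sub)ring `E`. -/
def IsIdealOn (E I : AddSubgroup R) : Prop :=
  I ≤ E ∧ ∀ x ∈ I, ∀ r ∈ E, x * r ∈ I ∧ r * x ∈ I

/-- The largest two-sided ideal of the (sub)ring `E` contained in `J`. -/
def coreOn (E J : AddSubgroup R) : AddSubgroup R :=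
  sSup {K : AddSubgroup R | IsIdealOn E K ∧ K ≤ J}

/-- A maximal right ideal of the (sub)ring `E`. -/
def IsMaxRightIdealOn (E J : AddSubgroup R) : Prop :=
  IsRightIdealOn E J ∧ J ≠ E ∧ ∀ K : AddSubgroup R, IsRightIdealOn E K → J < K → K ≤ E → K = E

/-- A modular two-sided ideal of the (sub)ring `E`:
there is `e ∈ E` with `ea - a ∈ J` and `ae - a ∈ J` for all `a ∈ E`. -/
def IsModularIdealOn (E J : AddSubgroup R) : Prop :=
  ∃ e ∈ E, ∀ a ∈ E, e * a - a ∈ J ∧ a * e - a ∈ J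

/-- The classical Brown--McCoy radical of the (sub)ring `E`: the intersection of all
two-sided ideals `I` of `E` such that `E/I` is a simple ring with identity. -/
def brownMcCoyOn (E : AddSubgroup R) : Set R :=
  {a : R | a ∈ E ∧ ∀ I : AddSubgroup R, IsIdealOn E I → I ≠ E →
    IsModularIdealOn E I →
    (∀ K : AddSubgroup R, IsIdealOn E K → I ≤ K → K ≤ E → K = I ∨ K = E) → a ∈ I}

/-- `e` is a unity modulo `I`. -/
def IsUnityMod (e : R) (I : AddSubgroup R) : Prop := ∀ a : R, e * a - a ∈ I ∧ a * e - a ∈ I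

/-- `x` is a G-regular element of the (sub)ring `E`: there is no proper two-sided
ideal `I` of `E` such that `x` is a unity modulo `I`. -/
def GRegularOn (E : AddSubgroup R) (x : R) : Prop :=
  ∀ I : AddSubgroup R, IsIdealOn E I → I ≠ E →
    ¬ (∀ a ∈ E, x * a - a ∈ I ∧ a * x - a ∈ I)

end Rings

namespace SGraded

variable {S : Type v} {R : Type w} [NonUnitalRing R] (G : SGraded S R)

/-- An additive subgroup generated (as an additive group) by its homogeneous elements. -/
def IsHomSubgroup (I : AddSubgroup R) : Prop :=
  I = AddSubgroup.closure {a : R | a ∈ I ∧ G.Homog a}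

/-- A homogeneous right ideal of `R`. -/
def IsHomRightIdeal (I : AddSubgroup R) : Prop := IsRightIdeal I ∧ G.IsHomSubgroup I

/-- A homogeneous (two-sided) ideal of `R`. -/
def IsHomIdeal (I : AddSubgroup R) : Prop := IsTwoSidedIdeal' I ∧ G.IsHomSubgroup I

/-- `Ǐ`: the largest homogeneous ideal of `R` contained in `I`. -/
def core (I : AddSubgroup R) : AddSubgroup R :=
  sSup {J : AddSubgroup R | G.IsHomIdeal J ∧ J ≤ I}

/-- A homogeneous right ideal, maximal among the proper homogeneous right ideals of `R`. -/
def IsMaxHomRightIdeal (I : AddSubgroup R) : Prop :=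
  G.IsHomRightIdeal I ∧ I ≠ ⊤ ∧ ∀ K : AddSubgroup R, G.IsHomRightIdeal K → I < K → K = ⊤

/-- A modular homogeneous ideal of `R`: a homogeneous ideal admitting a homogeneous
unity modulo it. -/
def IsModularHomIdeal (I : AddSubgroup R) : Prop :=
  G.IsHomIdeal I ∧ ∃ e, G.Homog e ∧ IsUnityMod e I

/-- A homogeneous element is G-regular if it is a unity modulo no proper homogeneous
ideal of `R`. -/
def GRegular (x : R) : Prop :=
  ∀ I : AddSubgroup R, G.IsHomIdeal I → I ≠ ⊤ → ¬ IsUnityMod x I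

/-- The quotient graded ring `R/J` (graded by the images of the components) is a
regular simple graded ring whose identity is the image of a homogeneous element:
`R/J` is nonzero, regular, has an identity which is the image of a homogeneous
element of `R`, and has no homogeneous ideals other than `0` and `R/J`. -/
def QuotInM (J : AddSubgroup R) : Prop :=
  J ≠ ⊤ ∧
  (∃ e, G.Homog e ∧ IsUnityMod e J) ∧
  (∀ K : AddSubgroup R, G.IsHomIdeal K → J ≤ K → K = J ∨ K = ⊤) ∧
  (∀ a b c : R, G.Homog a → G.Homog b → G.Homog c → a ∉ J → b ∉ J → c ∉ J →
    ((a * c ∉ J → b * c ∉ J → G.Addable (a * c) (b * c) → G.Addable a b) ∧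
     (c * a ∉ J → c * b ∉ J → G.Addable (c * a) (c * b) → G.Addable a b)))

/-- The graded Brown--McCoy radical `𝒢(R)`: the intersection of all homogeneous right
ideals `I`, maximal among the proper homogeneous right ideals, such that `R/Ǐ` is a
regular simple graded ring with identity the image of a homogeneous element. -/
def gradedBM : Set R :=
  {a : R | ∀ I : AddSubgroup R, G.IsMaxHomRightIdeal I → G.QuotInM (G.core I) → a ∈ I}

/-- The quotient right `R`-module `R/J` (graded by the images of the components) is a
graded-simple graded right `R`-module, phrased inside `R`. -/
def QuotGradedSimple (J : AddSubgroup R) : Prop :=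
  (∃ x a : R, G.Homog x ∧ G.Homog a ∧ x * a ∉ J) ∧
  (∀ K : AddSubgroup R, G.IsHomRightIdeal K → J ≤ K → K = J ∨ K = ⊤) ∧
  (∀ I : AddSubgroup R, G.IsHomIdeal I → (∃ r : R, ∃ b ∈ I, r * b ∉ J) →
    ∃ b ∈ I, ∀ x : R, G.Homog x → x * b - x ∈ J)

end SGraded

/-- A graded right module over an `S`-graded ring `R`: a right `R`-module structure on
an additive commutative group `M` together with a family of additive subgroups indexed
by a nonempty set `D` whose internal direct sum is `M` and with `M_d · R_s ⊆ M_t`. -/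
structure GradedRightModule {S : Type v} {R : Type w} [NonUnitalRing R]
    (G : SGraded S R) (M : Type u) [AddCommGroup M] where
  smul : M → R → M
  add_smul : ∀ (x y : M) (a : R), smul (x + y) a = smul x a + smul y a
  smul_add : ∀ (x : M) (a b : R), smul x (a + b) = smul x a + smul x b
  smul_mul : ∀ (x : M) (a b : R), smul x (a * b) = smul (smul x a) b
  D : Type u
  nonemptyD : Nonempty D
  mcomp : D → AddSubgroup M
  mindependent : iSupIndep mcomp
  miSup_eq_top : (⨆ d, mcomp d) = ⊤
  graded : ∀ (d : D) (s : S), ∃ t : D, ∀ x ∈ mcomp d, ∀ r ∈ G.component s, smul x r ∈ mcomp t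

namespace GradedRightModule

variable {S : Type v} {R : Type w} [NonUnitalRing R] {G : SGraded S R}
  {M : Type u} [AddCommGroup M] (gm : GradedRightModule G M)

/-- A homogeneous element of `M`. -/
def HomogM (x : M) : Prop := ∃ d, x ∈ gm.mcomp d

/-- Addability of homogeneous elements of `M`. -/
def AddableM (x y : M) : Prop := x = 0 ∨ y = 0 ∨ ∃ d, x ∈ gm.mcomp d ∧ y ∈ gm.mcomp d

/-- A homogeneous submodule of `M`: a submodule generated (as an additive group)
by its homogeneous elements. -/
def IsHomSubmodule (N : AddSubgroup M) : Prop :=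
  (∀ x ∈ N, ∀ r : R, gm.smul x r ∈ N) ∧
  N = AddSubgroup.closure {x : M | x ∈ N ∧ gm.HomogM x}

/-- `M` is graded-irreducible. -/
def GradedIrreducible : Prop :=
  (∃ (x : M) (a : R), gm.HomogM x ∧ G.Homog a ∧ gm.smul x a ≠ 0) ∧
  ∀ N : AddSubgroup M, gm.IsHomSubmodule N → N = ⊥ ∨ N = ⊤

/-- `M` is graded-simple: graded-irreducible and for every homogeneous ideal `I` of `R`
with `M·I ≠ 0` there is `b ∈ I` acting as identity on all homogeneous elements of `M`. -/
def GradedSimple : Prop :=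
  gm.GradedIrreducible ∧
  ∀ I : AddSubgroup R, G.IsHomIdeal I → (∃ x : M, ∃ b ∈ I, gm.smul x b ≠ 0) →
    ∃ b ∈ I, ∀ x : M, gm.HomogM x → gm.smul x b = x

/-- `M` is a regular graded module. -/
def ModRegular : Prop :=
  ∀ (x : M) (a b : R), gm.HomogM x → G.Homog a → G.Homog b →
    gm.smul x a ≠ 0 → gm.smul x b ≠ 0 →
    gm.AddableM (gm.smul x a) (gm.smul x b) → G.Addable a b

end GradedRightModule

/-- The large graded Brown--McCoy radical `G_l(R)`: the homogeneous elements
annihilating every graded-simple graded right `R`-module. -/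
def largeGradedBM {S : Type v} {R : Type w} [NonUnitalRing R] (G : SGraded S R) : Set R :=
  {a : R | G.Homog a ∧ ∀ (M : Type u) [AddCommGroup M] (gm : GradedRightModule G M),
    gm.GradedSimple → ∀ x : M, gm.smul x a = 0}

/-!
Let `C = Ǐ` and let `e` be a unity modulo `C`. By Zorn's lemma `C` extends to an ideal `J`
maximal among those not containing `e`; then `R/J` is simple with identity, so `G(R) ⊆ J`.
The homogeneous elements of `J` generate a homogeneous ideal between `C` and `J ≠ R`, which by
graded simplicity of `R/C` is `C ⊆ I`.
-/

section Ideals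

variable {R : Type w} [NonUnitalRing R]

lemma isIdealOn_top_iff {I : AddSubgroup R} : IsIdealOn ⊤ I ↔ IsTwoSidedIdeal' I :=
  ⟨fun h x hx r => h.2 x hx r (AddSubgroup.mem_top r),
    fun h => ⟨le_top, fun x hx r _ => h x hx r⟩⟩

lemma isTwoSidedIdeal'_iff_le_comap {I : AddSubgroup R} :
    IsTwoSidedIdeal' I ↔
      ∀ r : R, I ≤ I.comap (AddMonoidHom.mulRight r) ⊓ I.comap (AddMonoidHom.mulLeft r) :=
  ⟨fun h r x hx => ⟨(h x hx r).1, (h x hx r).2⟩, fun h _ hx r => h r hx⟩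

lemma isTwoSidedIdeal'_sSup {𝒦 : Set (AddSubgroup R)} (h𝒦 : ∀ K ∈ 𝒦, IsTwoSidedIdeal' K) :
    IsTwoSidedIdeal' (sSup 𝒦) :=
  isTwoSidedIdeal'_iff_le_comap.2 fun r => sSup_le fun K hK x hx =>
    ⟨le_sSup hK (h𝒦 K hK x hx r).1, le_sSup hK (h𝒦 K hK x hx r).2⟩

lemma IsTwoSidedIdeal'.isRightIdeal {I : AddSubgroup R} (hI : IsTwoSidedIdeal' I) :
    IsRightIdeal I :=
  fun x hx r => (hI x hx r).1

lemma IsUnityMod.mono {e : R} {I J : AddSubgroup R} (he : IsUnityMod e I) (hIJ : I ≤ J) :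
    IsUnityMod e J :=
  fun a => ⟨hIJ (he a).1, hIJ (he a).2⟩

lemma eq_top_of_isUnityMod_of_mem {e : R} {I : AddSubgroup R} (hI : IsRightIdeal I)
    (he : IsUnityMod e I) (heI : e ∈ I) : I = ⊤ :=
  eq_top_iff.2 fun r _ => by simpa using I.sub_mem (hI e heI r) (he r).1

lemma exists_le_maximal_isTwoSidedIdeal'_not_mem {e : R} {C : AddSubgroup R}
    (hC : IsTwoSidedIdeal' C) (heC : e ∉ C) :
    ∃ J, C ≤ J ∧ Maximal (fun K => IsTwoSidedIdeal' K ∧ e ∉ K) J := by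
  refine zorn_le_nonempty₀ {K | IsTwoSidedIdeal' K ∧ e ∉ K}
    (fun c hc hchain y hy => ⟨sSup c, ⟨?_, ?_⟩, fun K => le_sSup⟩) C ⟨hC, heC⟩
  · exact isTwoSidedIdeal'_sSup fun K hK => (hc hK).1
  · rw [AddSubgroup.mem_sSup_of_directedOn ⟨y, hy⟩ hchain.directedOn]
    rintro ⟨K, hK, heK⟩
    exact (hc hK).2 heK

lemma brownMcCoyOn_top_subset_of_maximal {e : R} {J : AddSubgroup R}
    (hJ : Maximal (fun K => IsTwoSidedIdeal' K ∧ e ∉ K) J) (he : IsUnityMod e J) :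
    brownMcCoyOn (⊤ : AddSubgroup R) ⊆ J := by
  rintro a ⟨-, ha⟩
  refine ha J (isIdealOn_top_iff.2 hJ.1.1) (fun h => hJ.1.2 (h ▸ AddSubgroup.mem_top e))
    ⟨e, AddSubgroup.mem_top e, fun b _ => he b⟩ fun K hK hJK _ => ?_
  rw [isIdealOn_top_iff] at hK
  by_cases heK : e ∈ K
  · exact Or.inr (eq_top_of_isUnityMod_of_mem hK.isRightIdeal (he.mono hJK) heK)
  · exact Or.inl (le_antisymm (hJ.2 ⟨hK, heK⟩ hJK) hJK)

end Ideals

namespace SGraded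

variable {S : Type v} {R : Type w} [NonUnitalRing R] (G : SGraded S R)

lemma isHomIdeal_sSup {𝒦 : Set (AddSubgroup R)} (h𝒦 : ∀ K ∈ 𝒦, G.IsHomIdeal K) :
    G.IsHomIdeal (sSup 𝒦) := by
  refine ⟨isTwoSidedIdeal'_sSup fun K hK => (h𝒦 K hK).1, le_antisymm ?_ ?_⟩
  · refine sSup_le fun K hK => ?_
    rw [(h𝒦 K hK).2]
    exact AddSubgroup.closure_mono fun x hx => ⟨le_sSup hK hx.1, hx.2⟩
  · exact (AddSubgroup.closure_le _).2 fun x hx => hx.1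

lemma isHomIdeal_core (I : AddSubgroup R) : G.IsHomIdeal (G.core I) :=
  G.isHomIdeal_sSup fun _ hK => hK.1

lemma core_le (I : AddSubgroup R) : G.core I ≤ I :=
  sSup_le fun _ hK => hK.2

lemma le_core {I K : AddSubgroup R} (hK : G.IsHomIdeal K) (hKI : K ≤ I) : K ≤ G.core I :=
  le_sSup ⟨hK, hKI⟩

lemma top_le_of_component_le {P : AddSubgroup R} (hP : ∀ s, G.component s ≤ P) : ⊤ ≤ P :=
  G.iSup_eq_top ▸ iSup_le hP

lemma isHomIdeal_closure_homog {J : AddSubgroup R} (hJ : IsTwoSidedIdeal' J) :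
    G.IsHomIdeal (AddSubgroup.closure {x | x ∈ J ∧ G.Homog x}) := by
  set P := AddSubgroup.closure {x | x ∈ J ∧ G.Homog x}
  have hmul : ∀ s t, ∀ x ∈ G.component s, ∀ y ∈ G.component t, x * y ∈ J → x * y ∈ P := by
    intro s t x hx y hy hxyJ
    by_cases h0 : x * y = 0
    · exact h0 ▸ P.zero_mem
    · obtain ⟨u, hu⟩ := G.mul_cond s t ⟨x, hx, y, hy, h0⟩
      exact AddSubgroup.subset_closure ⟨hxyJ, u, hu x hx y hy⟩
  have hgen : ∀ x ∈ J, G.Homog x → ∀ r : R, x * r ∈ P ∧ r * x ∈ P := by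
    rintro x hxJ ⟨t, hxt⟩ r
    exact G.top_le_of_component_le (P := P.comap (AddMonoidHom.mulLeft x) ⊓
      P.comap (AddMonoidHom.mulRight x)) (fun s r' hr' => ⟨hmul t s x hxt r' hr' (hJ x hxJ r').1,
        hmul s t r' hr' x hxt (hJ x hxJ r').2⟩) (AddSubgroup.mem_top r)
  refine ⟨isTwoSidedIdeal'_iff_le_comap.2 fun r => ?_, le_antisymm ?_ ?_⟩
  · exact (AddSubgroup.closure_le _).2 fun y hy => hgen y hy.1 hy.2 r
  · exact AddSubgroup.closure_mono fun x hx => ⟨AddSubgroup.subset_closure hx, hx.2⟩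
  · exact (AddSubgroup.closure_le _).2 fun x hx => hx.1

lemma mem_core_of_homog {J : AddSubgroup R} (hJ : IsTwoSidedIdeal' J) {a : R}
    (haJ : a ∈ J) (ha : G.Homog a) : a ∈ G.core J :=
  G.le_core (G.isHomIdeal_closure_homog hJ) ((AddSubgroup.closure_le _).2 fun _ hx => hx.1)
    (AddSubgroup.subset_closure ⟨haJ, ha⟩)

end SGraded

variable {S : Type v} {R : Type w} [NonUnitalRing R]

theorem brownMcCoy_homog_subset_gradedBM_general (G : SGraded S R) :
    brownMcCoyOn (⊤ : AddSubgroup R) ∩ G.homogPart ⊆ G.gradedBM := by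
  rintro a ⟨haBM, haHom⟩ I - ⟨hCne, ⟨e, -, he⟩, hsimple, -⟩
  have hC := G.isHomIdeal_core I
  have heC : e ∉ G.core I := fun heC =>
    hCne (eq_top_of_isUnityMod_of_mem hC.1.isRightIdeal he heC)
  obtain ⟨J, hCJ, hJ⟩ := exists_le_maximal_isTwoSidedIdeal'_not_mem hC.1 heC
  have haJ : a ∈ G.core J :=
    G.mem_core_of_homog hJ.1.1 (brownMcCoyOn_top_subset_of_maximal hJ (he.mono hCJ) haBM) haHom
  have hcoreJ : G.core J = G.core I := by
    refine (hsimple _ (G.isHomIdeal_core J) (G.le_core hC hCJ)).resolve_right fun h => ?_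
    exact hJ.1.2 (G.core_le J (h ▸ AddSubgroup.mem_top e))
  exact G.core_le I (hcoreJ ▸ haJ)

/-- For a regular `S`-graded ring `R`, every homogeneous element of
the classical Brown--McCoy radical `G(R)` belongs to the graded Brown--McCoy radical
`𝒢(R)`. -/
theorem brownMcCoy_homog_subset_gradedBM (G : SGraded S R) (hreg : G.Regular) :
    brownMcCoyOn (⊤ : AddSubgroup R) ∩ G.homogPart ⊆ G.gradedBM :=
  brownMcCoy_homog_subset_gradedBM_general G
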